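/- arXiv:2110.00772 — 4 statements merged into one kernel-verified Lean document; each statement's English description precedes it below -/
import Mathlib

section
/- With z defined as zᵀ = p₀ᵀ · (I - (α/N)·R)⁻¹ under the hypotheses above, we have ∑ j, z j = 1/(1-α). -/
open Matrix
theorem stmt_9 (K N : ℕ) (hK : 0 < K) (hN : 0 < N) (α : ℝ)
    (hα0 : 0 < α) (hα1 : α < 1)
    (R : Matrix (Fin K) (Fin K) ℝ)
    (hR0 : ∀ i j, 0 ≤ R i j) (hR1 : ∀ i j, R i j ≤ 1)
    (hRow : ∀ i, ∑ j, R i j = N)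
    (p₀ : Fin K → ℝ) (hp0 : ∀ i, 0 ≤ p₀ i) (hp1 : ∑ i, p₀ i = 1) :
    ∑ j, (∑ i, p₀ i * ((1 : Matrix (Fin K) (Fin K) ℝ) - (α / N) • R)⁻¹ i j)
      = 1 / (1 - α) := by
  set M : Matrix (Fin K) (Fin K) ℝ := (1 : Matrix (Fin K) (Fin K) ℝ) - (α / N) • R with hM
  have hNpos : (0:ℝ) < N := by exact_mod_cast hN
  have hcoef : 0 < α / N := div_pos hα0 hNpos
  -- strict diagonal dominance
  have hdet : M.det ≠ 0 := by
    apply det_ne_zero_of_sum_row_lt_diag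
    intro k
    have habs : ∀ j, ‖M k j‖ = (if k = j then |1 - α / N * R k j| else α / N * R k j) := by
      intro j
      by_cases h : k = j <;>
        simp [hM, Matrix.sub_apply, Matrix.one_apply, Matrix.smul_apply, h, Real.norm_eq_abs,
          abs_of_nonneg, mul_nonneg hcoef.le (hR0 k j), abs_of_pos hα0, abs_of_nonneg (hR0 k j),
          abs_div, abs_of_pos hNpos, div_mul_eq_mul_div, mul_div_assoc]
    have hsum : ∑ j ∈ Finset.univ.erase k, ‖M k j‖
        = α / N * (N - R k k) := by
      rw [Finset.sum_congr rfl fun j hj => by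
        rw [habs j, if_neg (Finset.ne_of_mem_erase hj).symm]]
      rw [← Finset.mul_sum, Finset.sum_erase_eq_sub (Finset.mem_univ k), hRow k]
    have hdiag : ‖M k k‖ = 1 - α / N * R k k := by
      rw [habs k, if_pos rfl, abs_of_nonneg]
      have : α / N * R k k ≤ α / N * 1 := by
        exact mul_le_mul_of_nonneg_left (hR1 k k) hcoef.le
      have h1N : (1:ℝ) ≤ N := by exact_mod_cast hN
      have hαN : α / N ≤ α := by
        rw [div_le_iff₀ hNpos]; nlinarith
      nlinarith
    rw [hsum, hdiag]
    have : α / N * (N - R k k) + α / N * R k k = α := by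
      field_simp; ring
    nlinarith
  have hinv : Invertible M := M.invertibleOfIsUnitDet (Ne.isUnit hdet)
  -- ones vector
  have hones : M *ᵥ (fun _ => (1:ℝ)) = fun _ => (1 - α) := by
    funext i
    simp only [Matrix.mulVec, dotProduct, mul_one, hM, Matrix.sub_apply,
      Matrix.smul_apply, Matrix.one_apply, smul_eq_mul]
    rw [Finset.sum_sub_distrib]
    simp [← Finset.mul_sum, hRow i, mul_div_assoc, div_mul_cancel₀ _ hNpos.ne']
  have hinvones : M⁻¹ *ᵥ (fun _ => (1:ℝ)) = fun _ => (1 - α)⁻¹ := by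
    have h1α : (1:ℝ) - α ≠ 0 := by linarith
    have : M⁻¹ *ᵥ (M *ᵥ (fun _ => (1:ℝ))) = fun _ => (1:ℝ) := by
      rw [Matrix.mulVec_mulVec, Matrix.nonsing_inv_mul M (Ne.isUnit hdet), Matrix.one_mulVec]
    rw [hones] at this
    funext i
    have := congrFun this i
    simp only [Matrix.mulVec, dotProduct] at this ⊢
    have hconst : ∑ j, M⁻¹ i j * (1 - α) = 1 := this
    have : (∑ j, M⁻¹ i j) * (1 - α) = 1 := by rw [Finset.sum_mul]; exact hconst
    field_simp at this ⊢
    linarith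
  have hrowsum : ∀ i, ∑ j, M⁻¹ i j = (1 - α)⁻¹ := by
    intro i
    have := congrFun hinvones i
    simpa [Matrix.mulVec, dotProduct] using this
  rw [Finset.sum_comm]
  calc ∑ i, ∑ j, p₀ i * M⁻¹ i j = ∑ i, p₀ i * ∑ j, M⁻¹ i j := by
        simp [Finset.mul_sum]
    _ = ∑ i, p₀ i * (1 - α)⁻¹ := by simp_rw [hrowsum]
    _ = 1 / (1 - α) := by rw [← Finset.sum_mul, hp1, one_mul, one_div]
end

section
/- Suppose matrices R¹, ..., R^N (each K×K, nonnegative, rows summing to 1) satisfy ∑_{n=1}^N Rⁿ i j ≤ 1 for every pair (i,j). Then for each row i, regarding row i of each Rⁿ as a probability distribution on Fin K, there exists a coupling of these N distributions supported on N-tuples of pairwise distinct contents. Conversely, if some pair (i,j) has ∑_n Rⁿ i j > 1, no such coupling exists. -/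
open Finset

lemma stmt13_filter_eq (K N : ℕ) (hKN : N ≤ K) :
    Finset.univ.filter (fun r : Fin K => (r:ℕ) < N) = Finset.univ.image (Fin.castLE hKN) := by
  ext r
  simp only [mem_filter, mem_univ, true_and, mem_image]
  constructor
  · intro h; exact ⟨⟨r, h⟩, by ext; simp⟩
  · rintro ⟨n, rfl⟩; exact n.2

lemma stmt13_sum_split (K N : ℕ) (hKN : N ≤ K) (f : Fin K → ℝ) :
    ∑ r, f r = (∑ n : Fin N, f (Fin.castLE hKN n)) +
      ∑ r ∈ Finset.univ.filter (fun r : Fin K => ¬ (r:ℕ) < N), f r := by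
  rw [← Finset.sum_filter_add_sum_filter_not Finset.univ (fun r : Fin K => (r:ℕ) < N) f]
  congr 1
  rw [stmt13_filter_eq K N hKN, Finset.sum_image (fun a _ b _ h => Fin.castLE_injective hKN h)]

lemma stmt13_card_not (K N : ℕ) (hKN : N ≤ K) :
    (Finset.univ.filter (fun r : Fin K => ¬ (r:ℕ) < N)).card = K - N := by
  have h1 : (Finset.univ.filter (fun r : Fin K => (r:ℕ) < N)).card = N := by
    rw [stmt13_filter_eq K N hKN,
      Finset.card_image_of_injective _ (Fin.castLE_injective hKN)]
    simp
  have := Finset.card_filter_add_card_filter_not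
    (s := (Finset.univ : Finset (Fin K))) (p := fun r : Fin K => (r:ℕ) < N)
  rw [h1, Finset.card_univ, Fintype.card_fin] at this
  omega

theorem stmt_13 (K N : ℕ) (hN : 0 < N) (hKN : N ≤ K)
    (Rn : Fin N → Matrix (Fin K) (Fin K) ℝ)
    (hRn0 : ∀ n i j, 0 ≤ Rn n i j)
    (hRnRow : ∀ n i, ∑ j, Rn n i j = 1)
    (i : Fin K) :
    ((∀ j, ∑ n, Rn n i j ≤ 1) →
      ∃ μ : (Fin N → Fin K) → ℝ,
        (∀ t, 0 ≤ μ t) ∧ (∑ t, μ t = 1) ∧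
        (∀ n j, ∑ t ∈ Finset.univ.filter (fun t : Fin N → Fin K => t n = j), μ t
            = Rn n i j) ∧
        (∀ t : Fin N → Fin K, ¬ Function.Injective t → μ t = 0)) ∧
    ((∃ j, 1 < ∑ n, Rn n i j) →
      ¬ ∃ μ : (Fin N → Fin K) → ℝ,
        (∀ t, 0 ≤ μ t) ∧ (∑ t, μ t = 1) ∧
        (∀ n j, ∑ t ∈ Finset.univ.filter (fun t : Fin N → Fin K => t n = j), μ t
            = Rn n i j) ∧
        (∀ t : Fin N → Fin K, ¬ Function.Injective t → μ t = 0)) := by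
  constructor
  · -- forward direction
    intro hle
    set c : Fin K → ℝ := fun j => ∑ n, Rn n i j with hc
    have hc0 : ∀ j, 0 ≤ c j := fun j => Finset.sum_nonneg fun n _ => hRn0 n i j
    have hcsum : ∑ j, c j = N := by
      rw [Finset.sum_comm]
      simp [hRnRow]
    set P : Matrix (Fin K) (Fin K) ℝ :=
      fun r j => if h : (r:ℕ) < N then Rn ⟨r, h⟩ i j else (1 - c j) / ((K:ℝ) - N) with hP
    have hKN' : (N:ℝ) ≤ (K:ℝ) := by exact_mod_cast hKN
    -- P is doubly stochastic
    have hPmem : P ∈ doublyStochastic ℝ (Fin K) := by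
      rw [mem_doublyStochastic_iff_sum]
      refine ⟨?_, ?_, ?_⟩
      · intro r j
        by_cases h : (r:ℕ) < N
        · simp only [hP, dif_pos h]; exact hRn0 _ i j
        · simp only [hP, dif_neg h]
          apply div_nonneg (by linarith [hle j]) (by linarith)
      · intro r
        by_cases h : (r:ℕ) < N
        · simp only [hP, dif_pos h]; exact hRnRow _ i
        · have hKN2 : N < K := lt_of_le_of_lt (Nat.not_lt.mp h) r.2
          have hltR : (N:ℝ) < K := by exact_mod_cast hKN2
          simp only [hP, dif_neg h]
          rw [← Finset.sum_div, Finset.sum_sub_distrib, hcsum]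
          simp only [Finset.sum_const, Finset.card_univ, Fintype.card_fin, nsmul_eq_mul,
            mul_one]
          rw [div_eq_one_iff_eq (sub_ne_zero.mpr hltR.ne')]
      · intro j
        rw [stmt13_sum_split K N hKN (fun r => P r j)]
        have h1 : (∑ n : Fin N, P (Fin.castLE hKN n) j) = c j := by
          apply Finset.sum_congr rfl
          intro n _
          have hn : ((Fin.castLE hKN n : Fin K) : ℕ) < N := n.2
          simp only [hP]
          rw [dif_pos hn]
          congr 1
        have h2 : ∀ r ∈ Finset.univ.filter (fun r : Fin K => ¬ (r:ℕ) < N),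
            P r j = (1 - c j) / ((K:ℝ) - N) := by
          intro r hr
          simp only [mem_filter] at hr
          simp only [hP, dif_neg hr.2]
        rw [h1, Finset.sum_congr rfl h2, Finset.sum_const, stmt13_card_not K N hKN,
          nsmul_eq_mul]
        rcases eq_or_lt_of_le hKN with heq | hlt
        · -- K = N : column sums of the original matrix are already 1
          have hcj : c j = 1 := by
            by_contra hne
            have hlt1 : c j < 1 := lt_of_le_of_ne (hle j) hne
            have : ∑ j', c j' < ∑ _j' : Fin K, (1:ℝ) :=
              Finset.sum_lt_sum (fun j' _ => hle j') ⟨j, Finset.mem_univ j, hlt1⟩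
            rw [hcsum] at this
            simp only [Finset.sum_const, Finset.card_univ, Fintype.card_fin, nsmul_eq_mul,
              smul_eq_mul, mul_one] at this
            have : (N:ℝ) < K := this
            rw [← heq] at this
            exact lt_irrefl _ this
          rw [hcj, ← heq]
          simp
        · have hKN2 : (0:ℝ) < (K:ℝ) - N := by
            have : (N:ℝ) < K := by exact_mod_cast hlt
            linarith
          have hcast : ((K - N : ℕ) : ℝ) = (K:ℝ) - N := by
            push_cast [Nat.cast_sub hKN]; ring
          rw [hcast]
          have hne : (K:ℝ) - N ≠ 0 := ne_of_gt hKN2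
          field_simp
          ring
    obtain ⟨w, hw0, hw1, hwP⟩ := exists_eq_sum_perm_of_mem_doublyStochastic hPmem
    -- the coupling
    refine ⟨fun t => ∑ σ : Equiv.Perm (Fin K),
        if (fun n => σ (Fin.castLE hKN n)) = t then w σ else 0, ?_, ?_, ?_, ?_⟩
    · intro t
      apply Finset.sum_nonneg
      intro σ _
      split <;> simp [hw0 σ]
    · rw [Finset.sum_comm]
      calc ∑ σ : Equiv.Perm (Fin K), ∑ t : Fin N → Fin K,
            (if (fun n => σ (Fin.castLE hKN n)) = t then w σ else 0)
          = ∑ σ : Equiv.Perm (Fin K), w σ := by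
            apply Finset.sum_congr rfl
            intro σ _
            rw [Finset.sum_ite_eq Finset.univ (fun n => σ (Fin.castLE hKN n)) (fun _ => w σ)]
            simp
        _ = 1 := hw1
    · intro n j
      have key : ∀ σ : Equiv.Perm (Fin K),
          (∑ t ∈ Finset.univ.filter (fun t : Fin N → Fin K => t n = j),
            (if (fun m => σ (Fin.castLE hKN m)) = t then w σ else 0))
          = if σ (Fin.castLE hKN n) = j then w σ else 0 := by
        intro σ
        rw [Finset.sum_ite_eq (Finset.univ.filter (fun t : Fin N → Fin K => t n = j))
          (fun m => σ (Fin.castLE hKN m)) (fun _ => w σ)]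
        simp
      rw [Finset.sum_comm]
      rw [Finset.sum_congr rfl (fun σ _ => key σ)]
      have hent := congrFun (congrFun hwP (Fin.castLE hKN n)) j
      simp only [Matrix.sum_apply, Matrix.smul_apply, Equiv.Perm.permMatrix,
        PEquiv.toMatrix_apply, Equiv.toPEquiv_apply, Option.mem_def, Option.some.injEq,
        smul_eq_mul, mul_ite, mul_one, mul_zero] at hent
      rw [hent]
      simp only [hP]
      rw [dif_pos (show ((Fin.castLE hKN n : Fin K) : ℕ) < N from n.2)]
      congr 1
    · intro t ht
      apply Finset.sum_eq_zero
      intro σ _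
      rw [if_neg]
      intro hcontra
      apply ht
      rw [← hcontra]
      exact fun a b hab => Fin.castLE_injective hKN (σ.injective hab)
  · -- converse direction
    rintro ⟨j, hj⟩ ⟨μ, hμ0, hμ1, hμm, hμinj⟩
    have hswap : ∑ n, Rn n i j
        = ∑ t : Fin N → Fin K, ∑ n : Fin N, (if t n = j then μ t else 0) := by
      rw [Finset.sum_comm]
      apply Finset.sum_congr rfl
      intro n _
      rw [← hμm n j, Finset.sum_filter]
    have hbound : ∀ t : Fin N → Fin K,
        (∑ n : Fin N, (if t n = j then μ t else 0)) ≤ μ t := by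
      intro t
      by_cases hμt : μ t = 0
      · simp [hμt]
      · have htinj : Function.Injective t := by
          by_contra h
          exact hμt (hμinj t h)
        rw [← Finset.sum_filter]
        simp only [Finset.sum_const, nsmul_eq_mul]
        have hcard : ((Finset.univ.filter fun n => t n = j).card : ℝ) ≤ 1 := by
          have : (Finset.univ.filter fun n => t n = j).card ≤ 1 := by
            rw [Finset.card_le_one]
            intro a ha b hb
            simp only [mem_filter] at ha hb
            exact htinj (ha.2.trans hb.2.symm)
          exact_mod_cast this
        have := hμ0 t
        nlinarith
    have : ∑ n, Rn n i j ≤ 1 := by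
      rw [hswap, ← hμ1]
      exact Finset.sum_le_sum fun t _ => hbound t
    linarith
end

section
/- Let f : Matrix (Fin K) (Fin K) ℝ → ℝ be defined on the set of R with entries in [0,1] and rows summing to N by f(R) = p₀ᵀ (I - (α/N)R)⁻¹ c. If p₀ = c = w for some vector w, then f(R) = wᵀ (I - (α/N)R)⁻¹ w, and this function is not convex in R in general: there exist K, N, α, w and feasible matrices R₁, R₂ such that f((R₁+R₂)/2) > (f(R₁)+f(R₂))/2. -/
open scoped Matrix

theorem stmt_14 :
    ∃ (K N : ℕ) (α : ℝ) (w : Fin K → ℝ)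
      (R₁ R₂ : Matrix (Fin K) (Fin K) ℝ),
      0 < K ∧ 0 < N ∧ 0 < α ∧ α < 1 ∧
      (∀ i j, 0 ≤ R₁ i j ∧ R₁ i j ≤ 1) ∧ (∀ i, ∑ j, R₁ i j = N) ∧
      (∀ i j, 0 ≤ R₂ i j ∧ R₂ i j ≤ 1) ∧ (∀ i, ∑ j, R₂ i j = N) ∧
      (∀ i j, 0 ≤ ((1 / 2 : ℝ) • (R₁ + R₂)) i j ∧ ((1 / 2 : ℝ) • (R₁ + R₂)) i j ≤ 1) ∧
      (∀ i, ∑ j, ((1 / 2 : ℝ) • (R₁ + R₂)) i j = N) ∧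
      w ⬝ᵥ (((1 : Matrix (Fin K) (Fin K) ℝ) - (α / N) • ((1 / 2 : ℝ) • (R₁ + R₂)))⁻¹).mulVec w
        > (w ⬝ᵥ (((1 : Matrix (Fin K) (Fin K) ℝ) - (α / N) • R₁)⁻¹).mulVec w
           + w ⬝ᵥ (((1 : Matrix (Fin K) (Fin K) ℝ) - (α / N) • R₂)⁻¹).mulVec w) / 2 := by
  refine ⟨2, 1, 1/2, ![1, 0], !![0, 1; 0, 1], !![0, 1; 1, 0], ?_⟩
  have e1 : ((1 : Matrix (Fin 2) (Fin 2) ℝ) - ((1/2 : ℝ) / (1 : ℕ)) • (!![0, 1; 0, 1] : Matrix (Fin 2) (Fin 2) ℝ))⁻¹ = !![1, 1; 0, 2] := by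
    apply Matrix.inv_eq_right_inv
    ext i j
    fin_cases i <;> fin_cases j <;>
      simp [Matrix.mul_apply, Fin.sum_univ_two, Matrix.one_apply] <;> norm_num
  have e2 : ((1 : Matrix (Fin 2) (Fin 2) ℝ) - ((1/2 : ℝ) / (1 : ℕ)) • (!![0, 1; 1, 0] : Matrix (Fin 2) (Fin 2) ℝ))⁻¹ = !![4/3, 2/3; 2/3, 4/3] := by
    apply Matrix.inv_eq_right_inv
    ext i j
    fin_cases i <;> fin_cases j <;>
      simp [Matrix.mul_apply, Fin.sum_univ_two, Matrix.one_apply] <;> norm_num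
  have e3 : ((1 : Matrix (Fin 2) (Fin 2) ℝ) - ((1/2 : ℝ) / (1 : ℕ)) • ((1 / 2 : ℝ) • ((!![0, 1; 0, 1] : Matrix (Fin 2) (Fin 2) ℝ) + !![0, 1; 1, 0])))⁻¹ = !![6/5, 4/5; 2/5, 8/5] := by
    apply Matrix.inv_eq_right_inv
    ext i j
    fin_cases i <;> fin_cases j <;>
      simp [Matrix.mul_apply, Fin.sum_univ_two, Matrix.one_apply] <;> norm_num
  refine ⟨by norm_num, by norm_num, by norm_num, by norm_num, ?_, ?_, ?_, ?_, ?_, ?_, ?_⟩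
  · intro i j; fin_cases i <;> fin_cases j <;> norm_num
  · intro i; fin_cases i <;> simp [Fin.sum_univ_two]
  · intro i j; fin_cases i <;> fin_cases j <;> norm_num
  · intro i; fin_cases i <;> simp [Fin.sum_univ_two]
  · intro i j; fin_cases i <;> fin_cases j <;> norm_num
  · intro i; fin_cases i <;> simp [Fin.sum_univ_two] <;> norm_num
  · rw [e1, e2, e3]
    simp [Matrix.mulVec, dotProduct, Fin.sum_univ_two]
    norm_num
end

section
/- Under the hypotheses of the LP reformulation with p₀ strictly positive: if (z, F) is feasible (F i j ≥ 0, z j = (α/N)∑ i F i j + p₀ j, ∑ j F i j = N z i, F i j ≤ z i, F i i = 0), then defining R i j = F i j / z i yields a matrix with entries in [0,1], zero diagonal, and rows summing to N, and moreover zᵀ = p₀ᵀ (I - (α/N)R)⁻¹. -/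
theorem stmt_18 (K N : ℕ) (hK : 0 < K) (hN : 0 < N) (hNK : N + 1 ≤ K) (α : ℝ)
    (hα0 : 0 < α) (hα1 : α < 1)
    (p₀ : Fin K → ℝ) (hp : ∀ j, 0 < p₀ j)
    (z : Fin K → ℝ) (F : Matrix (Fin K) (Fin K) ℝ)
    (hF0 : ∀ i j, 0 ≤ F i j) (hFdiag : ∀ i, F i i = 0)
    (hFz : ∀ i j, F i j ≤ z i)
    (hFrow : ∀ i, ∑ j, F i j = N * z i)
    (hbal : ∀ j, z j = (α / N) * (∑ i, F i j) + p₀ j) :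
    (∀ i j, 0 ≤ F i j / z i) ∧ (∀ i j, F i j / z i ≤ 1) ∧
    (∀ i, F i i / z i = 0) ∧
    (∀ i, ∑ j, F i j / z i = N) ∧
    (∀ j, z j = ∑ i, p₀ i *
      ((1 : Matrix (Fin K) (Fin K) ℝ) - (α / N) • Matrix.of (fun i j => F i j / z i))⁻¹ i j) := by
  have hNpos : (0 : ℝ) < N := by exact_mod_cast hN
  have hαN : 0 < α / N := div_pos hα0 hNpos
  have hz : ∀ i, 0 < z i := by
    intro i
    rw [hbal i]
    have : 0 ≤ (α / N) * (∑ k, F k i) :=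
      mul_nonneg hαN.le (Finset.sum_nonneg fun k _ => hF0 k i)
    linarith [hp i]
  set M : Matrix (Fin K) (Fin K) ℝ :=
    (1 : Matrix (Fin K) (Fin K) ℝ) - (α / N) • Matrix.of (fun i j => F i j / z i) with hM
  have hrowsum : ∀ i, ∑ j, F i j / z i = (N : ℝ) := by
    intro i
    rw [← Finset.sum_div, hFrow i, mul_div_assoc, div_self (hz i).ne', mul_one]
  have hMdet : M.det ≠ 0 := by
    apply det_ne_zero_of_sum_row_lt_diag
    intro k
    have hdiag : M k k = 1 := by
      simp [hM, Matrix.one_apply, hFdiag k]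
    rw [hdiag]
    have hoff : ∀ j ∈ Finset.univ.erase k, ‖M k j‖ = (α / N) * (F k j / z k) := by
      intro j hj
      have hjk : j ≠ k := Finset.ne_of_mem_erase hj
      have : M k j = -((α / N) * (F k j / z k)) := by
        simp [hM, Matrix.one_apply, hjk.symm]
      rw [this, norm_neg, Real.norm_of_nonneg
        (mul_nonneg hαN.le (div_nonneg (hF0 k j) (hz k).le))]
    rw [Finset.sum_congr rfl hoff]
    have : ∑ j ∈ Finset.univ.erase k, (α / N) * (F k j / z k)
        = ∑ j, (α / N) * (F k j / z k) := by
      apply Finset.sum_erase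
      simp [hFdiag k]
    rw [this, ← Finset.mul_sum, hrowsum k]
    have : α / N * N = α := div_mul_cancel₀ α hNpos.ne'
    rw [this]
    simpa using hα1
  have hvec : Matrix.vecMul z M = p₀ := by
    funext j
    simp only [hM, Matrix.vecMul, dotProduct, Matrix.sub_apply, Matrix.smul_apply,
      Matrix.one_apply, Matrix.of_apply, smul_eq_mul]
    have : ∀ i, z i * ((if i = j then (1:ℝ) else 0) - α / N * (F i j / z i))
        = (if i = j then z i else 0) - α / N * F i j := by
      intro i
      rw [mul_sub]
      congr 1
      · split <;> simp
      · rw [mul_comm, mul_assoc, div_mul_cancel₀ _ (hz i).ne']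
    rw [Finset.sum_congr rfl fun i _ => this i, Finset.sum_sub_distrib]
    simp [← Finset.mul_sum, hbal j]
  have key : ∀ j, z j = (Matrix.vecMul p₀ M⁻¹) j := by
    have : Matrix.vecMul p₀ M⁻¹ = Matrix.vecMul (Matrix.vecMul z M) M⁻¹ := by rw [hvec]
    rw [this, Matrix.vecMul_vecMul, Matrix.mul_nonsing_inv M (isUnit_iff_ne_zero.mpr hMdet),
      Matrix.vecMul_one]
    intro j; rfl
  refine ⟨fun i j => div_nonneg (hF0 i j) (hz i).le,
    fun i j => (div_le_one (hz i)).mpr (hFz i j),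
    fun i => by simp [hFdiag i],
    hrowsum,
    fun j => ?_⟩
  rw [key j]
  simp [Matrix.vecMul, dotProduct]
end
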